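/- arXiv:1708.00564 — 2 statements merged into one kernel-verified Lean document; each statement's English description precedes it below -/
import Mathlib

section
/- Let p and q be primes with q ≡ 3 (mod 4), and let a be an integer with a² ≡ -p (mod q). Then the symmetric 3×3 rational matrix T₁ = [[(a²q + a² + p)/q, -a, -a(q+1)/2], [-a, 1, q/2], [-a(q+1)/2, q/2, q(q+1)/4]] is positive definite and has determinant det(T₁) = p/4, so that 4·det(T₁) = p. Moreover its diagonal entries are integers (q divides a²q + a² + p, and 4 divides q(q+1)) and twice each off-diagonal entry is an integer. -/
/-!
Completing the square gives
`q · 4 xᵀT₁x = 4q (x₁ - a x₀ + q x₂ / 2)² + (q x₂ - 2a x₀)² + 4p x₀²`,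
a positive combination of squares of three independent linear forms, so `T₁` is positive
definite. The integrality claims come from `a² + p ≡ 0 (mod q)` and `q + 1 ≡ 0 (mod 4)`.
-/

open Matrix

section Field

variable {K : Type*} [Field K]

def schulzePillotMatrix (a p q : K) : Matrix (Fin 3) (Fin 3) K :=
  !![(a ^ 2 * q + a ^ 2 + p) / q, -a, -a * (q + 1) / 2;
     -a, 1, q / 2;
     -a * (q + 1) / 2, q / 2, q * (q + 1) / 4]

theorem schulzePillotMatrix_isSymm (a p q : K) : (schulzePillotMatrix a p q).IsSymm := by
  ext i j
  fin_cases i <;> fin_cases j <;> rfl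

variable [CharZero K] {q : K}

theorem det_schulzePillotMatrix (hq : q ≠ 0) (a p : K) :
    (schulzePillotMatrix a p q).det = p / 4 := by
  simp only [schulzePillotMatrix, det_fin_three, of_apply, cons_val', cons_val_zero,
    cons_val_one, head_cons, empty_val', cons_val_fin_one, head_fin_const, cons_val_two, tail_cons]
  field_simp
  ring

theorem mul_dotProduct_mulVec_schulzePillotMatrix (hq : q ≠ 0) (a p : K) (x : Fin 3 → K) :
    q * (4 * (x ⬝ᵥ schulzePillotMatrix a p q *ᵥ x)) =
      4 * q * (x 1 - a * x 0 + q * x 2 / 2) ^ 2 + (q * x 2 - 2 * a * x 0) ^ 2 +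
        4 * p * x 0 ^ 2 := by
  simp only [schulzePillotMatrix, mulVec, dotProduct, of_apply, Fin.sum_univ_three, cons_val',
    cons_val_zero, cons_val_one, head_cons, empty_val', cons_val_fin_one, head_fin_const,
    cons_val_two, tail_cons]
  field_simp
  ring

end Field

theorem dotProduct_mulVec_schulzePillotMatrix_pos {K : Type*} [Field K] [LinearOrder K]
    [IsStrictOrderedRing K] {p q : K} (hp : 0 < p) (hq : 0 < q) (a : K) {x : Fin 3 → K}
    (hx : x ≠ 0) : 0 < x ⬝ᵥ schulzePillotMatrix a p q *ᵥ x := by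
  by_contra! hle
  have hA : 0 ≤ 4 * q * (x 1 - a * x 0 + q * x 2 / 2) ^ 2 := by positivity
  have hB : 0 ≤ (q * x 2 - 2 * a * x 0) ^ 2 := sq_nonneg _
  have hC : 0 ≤ 4 * p * x 0 ^ 2 := by positivity
  have hsum : 4 * q * (x 1 - a * x 0 + q * x 2 / 2) ^ 2 + (q * x 2 - 2 * a * x 0) ^ 2 +
      4 * p * x 0 ^ 2 = 0 := by
    refine le_antisymm ?_ (by linarith)
    rw [← mul_dotProduct_mulVec_schulzePillotMatrix hq.ne']
    exact mul_nonpos_of_nonneg_of_nonpos hq.le (by linarith)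
  obtain ⟨⟨h1, h2⟩, h0⟩ :=
    (add_eq_zero_iff_of_nonneg (add_nonneg hA hB) hC).1 hsum |>.imp_left
      (add_eq_zero_iff_of_nonneg hA hB).1
  simp only [mul_eq_zero, pow_eq_zero_iff, OfNat.ofNat_ne_zero, hp.ne', hq.ne', ne_eq,
    not_false_eq_true, or_self, false_or] at h0 h1 h2
  have hx2 : x 2 = 0 := by simpa [h0, hq.ne'] using h2
  have hx1 : x 1 = 0 := by simpa [h0, hx2] using h1
  exact hx (funext fun i => by fin_cases i <;> assumption)

theorem exists_int_eq_schulzePillotMatrix_apply_self {a p q : ℤ}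
    (hq : q ∣ a ^ 2 * q + a ^ 2 + p) (h4 : 4 ∣ q * (q + 1)) (i : Fin 3) :
    ∃ z : ℤ, schulzePillotMatrix (a : ℚ) p q i i = z := by
  fin_cases i
  · exact ⟨(a ^ 2 * q + a ^ 2 + p) / q,
      by simp [schulzePillotMatrix, Int.cast_div_charZero hq]⟩
  · exact ⟨1, by simp [schulzePillotMatrix]⟩
  · exact ⟨q * (q + 1) / 4, by simp [schulzePillotMatrix, Int.cast_div_charZero h4]⟩

theorem exists_int_eq_two_mul_schulzePillotMatrix_apply {a p q : ℤ}
    (hq : q ∣ a ^ 2 * q + a ^ 2 + p) (h4 : 4 ∣ q * (q + 1)) (i j : Fin 3) :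
    ∃ z : ℤ, 2 * schulzePillotMatrix (a : ℚ) p q i j = z := by
  obtain rfl | hij := eq_or_ne i j
  · obtain ⟨z, hz⟩ := exists_int_eq_schulzePillotMatrix_apply_self hq h4 i
    exact ⟨2 * z, by rw [hz]; push_cast; rfl⟩
  fin_cases i <;> fin_cases j <;> simp only [ne_eq, not_true_eq_false] at hij
  all_goals
    simp only [schulzePillotMatrix, of_apply, cons_val', cons_val, cons_val_zero, cons_val_one,
      cons_val_fin_one, Fin.zero_eta, Fin.mk_one, Fin.reduceFinMk, Fin.isValue, ne_eq,
      OfNat.ofNat_ne_zero, not_false_eq_true, mul_div_cancel₀]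
    exact_mod_cast exists_eq'

theorem ternary_matrix_schulze_pillot_general
    (p q : ℕ) (hp : p.Prime) (hq4 : q % 4 = 3)
    (a : ℤ) (ha : (q : ℤ) ∣ a ^ 2 + (p : ℤ)) :
    let T : Matrix (Fin 3) (Fin 3) ℚ :=
      !![((a : ℚ) ^ 2 * q + (a : ℚ) ^ 2 + p) / q, -(a : ℚ), -(a : ℚ) * (q + 1) / 2;
         -(a : ℚ), 1, (q : ℚ) / 2;
         -(a : ℚ) * (q + 1) / 2, (q : ℚ) / 2, (q : ℚ) * (q + 1) / 4]
    T.IsSymm ∧ (∀ x : Fin 3 → ℚ, x ≠ 0 → 0 < x ⬝ᵥ T.mulVec x) ∧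
      T.det = (p : ℚ) / 4 ∧ 4 * T.det = (p : ℚ) ∧
      ((q : ℤ) ∣ a ^ 2 * q + a ^ 2 + (p : ℤ)) ∧ ((4 : ℤ) ∣ (q : ℤ) * (q + 1)) ∧
      (∀ i, ∃ z : ℤ, T i i = (z : ℚ)) ∧
      (∀ i j, ∃ z : ℤ, 2 * T i j = (z : ℚ)) := by
  intro T
  have hq : (0 : ℚ) < q := by exact_mod_cast (by omega : 0 < q)
  have hdet : T.det = p / 4 := det_schulzePillotMatrix hq.ne' _ _
  have hdiv : (q : ℤ) ∣ a ^ 2 * q + a ^ 2 + p := by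
    simpa only [add_assoc] using (dvd_mul_left (q : ℤ) (a ^ 2)).add ha
  have h4 : (4 : ℤ) ∣ q * (q + 1) := Dvd.dvd.mul_left (by omega) _
  refine ⟨schulzePillotMatrix_isSymm _ _ _,
    fun x hx => dotProduct_mulVec_schulzePillotMatrix_pos (by exact_mod_cast hp.pos) hq _ hx,
    hdet, by rw [hdet]; ring, hdiv, h4, ?_, ?_⟩
  · have h := exists_int_eq_schulzePillotMatrix_apply_self hdiv h4
    simp only [Int.cast_natCast] at h
    exact h
  · have h := exists_int_eq_two_mul_schulzePillotMatrix_apply hdiv h4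
    simp only [Int.cast_natCast] at h
    exact h

/-- (Schulze-Pillot)  Let `p`, `q` be primes with `q ≡ 3 (mod 4)` and let `a` be an
integer with `a² ≡ -p (mod q)`.  Then the symmetric rational matrix
`T₁ = [[(a²q + a² + p)/q, -a, -a(q+1)/2], [-a, 1, q/2], [-a(q+1)/2, q/2, q(q+1)/4]]`
is positive definite with determinant `p/4` (so `4 · det T₁ = p`); its diagonal
entries are integers (indeed `q ∣ a²q + a² + p` and `4 ∣ q(q+1)`) and twice each
off-diagonal entry is an integer. -/
theorem ternary_matrix_schulze_pillot
    (p q : ℕ) (hp : p.Prime) (hq : q.Prime) (hq4 : q % 4 = 3)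
    (a : ℤ) (ha : (q : ℤ) ∣ a ^ 2 + (p : ℤ)) :
    let T : Matrix (Fin 3) (Fin 3) ℚ :=
      !![((a : ℚ) ^ 2 * q + (a : ℚ) ^ 2 + p) / q, -(a : ℚ), -(a : ℚ) * (q + 1) / 2;
         -(a : ℚ), 1, (q : ℚ) / 2;
         -(a : ℚ) * (q + 1) / 2, (q : ℚ) / 2, (q : ℚ) * (q + 1) / 4]
    T.IsSymm ∧ (∀ x : Fin 3 → ℚ, x ≠ 0 → 0 < x ⬝ᵥ T.mulVec x) ∧
      T.det = (p : ℚ) / 4 ∧ 4 * T.det = (p : ℚ) ∧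
      ((q : ℤ) ∣ a ^ 2 * q + a ^ 2 + (p : ℤ)) ∧ ((4 : ℤ) ∣ (q : ℤ) * (q + 1)) ∧
      (∀ i, ∃ z : ℤ, T i i = (z : ℚ)) ∧
      (∀ i j, ∃ z : ℤ, 2 * T i j = (z : ℚ)) :=
  ternary_matrix_schulze_pillot_general p q hp hq4 a ha
end

section
/- For every prime p there exists a symmetric positive definite 3×3 rational matrix T such that every diagonal entry of T is an integer, every entry of 2T is an integer, and det(T) = p/4 (equivalently, D(T) := 2²·det(T) = p). -/
/-!
Choose a prime `q ≡ 3 (mod 4)` modulo which `-p` is a square: `q = 3` for `p = 2`, `q = p` for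
`p ≡ 3 (mod 4)`, and for `p ≡ 1 (mod 4)` a Dirichlet prime `q` with `(p/q) = -1`, so that `-p` is a
square because `-1` is not. Writing `q = 4k + 3` and `s² + p = qm`, the form
`x² + xy + (k+1)y² + syz + mz²` is half-integral with `4 det = qm - s² = p`, and completing squares
shows that it is positive definite.
-/

open Matrix

theorem FiniteField.isSquare_mul_of_not_isSquare {F : Type*} [Field F] [Fintype F]
    {a b : F} (ha : ¬IsSquare a) (hb : ¬IsSquare b) : IsSquare (a * b) := by
  classical
  have ha0 : a ≠ 0 := by rintro rfl; exact ha IsSquare.zero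
  have hb0 : b ≠ 0 := by rintro rfl; exact hb IsSquare.zero
  rw [← quadraticChar_neg_one_iff_not_isSquare] at ha hb
  rw [← quadraticChar_one_iff_isSquare (mul_ne_zero ha0 hb0), map_mul, ha, hb, neg_one_mul,
    neg_neg]

theorem exists_prime_mod_four_eq_three_not_isSquare {p : ℕ} [Fact p.Prime] (hp : p % 4 = 1) :
    ∃ q : ℕ, q.Prime ∧ q % 4 = 3 ∧ ¬IsSquare (p : ZMod q) := by
  obtain ⟨u, hu⟩ := FiniteField.exists_nonsquare (F := ZMod p) (by
    rw [ZMod.ringChar_zmod_n]; omega)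
  have hcop : Nat.Coprime 4 p :=
    Nat.Coprime.pow_left 2 ((Nat.coprime_primes Nat.prime_two Fact.out).mpr (by omega))
  let e := ZMod.chineseRemainder hcop
  have hunit : IsUnit (e.symm (3, u)) := by
    rw [isUnit_map_iff, Prod.isUnit_iff]
    exact ⟨IsUnit.of_mul_eq_one (3 : ZMod 4) rfl, Ne.isUnit (by rintro rfl; exact hu IsSquare.zero)⟩
  have : NeZero (4 * p) := ⟨by have := (Fact.out : p.Prime).pos; omega⟩
  obtain ⟨q, -, hq, hqa⟩ := Nat.forall_exists_prime_gt_and_eq_mod hunit 0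
  obtain ⟨hq4, hqp⟩ : (q : ZMod 4) = 3 ∧ (q : ZMod p) = u := by
    refine Prod.ext_iff.mp (?_ : (q : ZMod 4 × ZMod p) = (3, u))
    rw [← map_natCast e, hqa, e.apply_symm_apply]
  have : Fact q.Prime := ⟨hq⟩
  have hq3 : q % 4 = 3 := by rw [← ZMod.val_natCast, hq4]; rfl
  refine ⟨q, hq, hq3, ?_⟩
  rwa [← ZMod.exists_sq_eq_prime_iff_of_mod_four_eq_one hp (by omega), hqp]

theorem exists_prime_mod_four_eq_three_isSquare_neg {p : ℕ} (hp : p.Prime) :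
    ∃ q : ℕ, q.Prime ∧ q % 4 = 3 ∧ IsSquare (-(p : ZMod q)) := by
  have : Fact p.Prime := ⟨hp⟩
  rcases hp.eq_two_or_odd' with rfl | hodd
  · exact ⟨3, Nat.prime_three, rfl, 1, by decide⟩
  obtain h1 | h3 : p % 4 = 1 ∨ p % 4 = 3 := by have := Nat.odd_iff.mp hodd; omega
  · obtain ⟨q, hq, hq3, hpq⟩ := exists_prime_mod_four_eq_three_not_isSquare h1
    have : Fact q.Prime := ⟨hq⟩
    have hneg : ¬IsSquare (-1 : ZMod q) := by
      rw [ZMod.exists_sq_eq_neg_one_iff]; exact not_not.mpr hq3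
    exact ⟨q, hq, hq3, by simpa using FiniteField.isSquare_mul_of_not_isSquare hneg hpq⟩
  · exact ⟨p, hp, h3, by simp⟩

theorem exists_dvd_sq_add_of_isSquare_neg {n a : ℕ} [NeZero n] (h : IsSquare (-(a : ZMod n))) :
    ∃ s : ℕ, n ∣ s ^ 2 + a := by
  obtain ⟨y, hy⟩ := h
  refine ⟨y.val, (ZMod.natCast_eq_zero_iff _ _).mp ?_⟩
  rw [Nat.cast_add, Nat.cast_pow, ZMod.natCast_zmod_val, sq, ← hy, neg_add_cancel]

section ternaryMatrix

def ternaryMatrix (k s m : ℤ) : Matrix (Fin 3) (Fin 3) ℚ :=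
  !![1, 1/2, 0; 1/2, k + 1, s/2; 0, s/2, m]

variable (k s m : ℤ)

theorem ternaryMatrix_isSymm : (ternaryMatrix k s m).IsSymm := by
  ext i j; fin_cases i <;> fin_cases j <;> rfl

theorem ternaryMatrix_diag_isInt (i : Fin 3) : ∃ z : ℤ, ternaryMatrix k s m i i = z := by
  fin_cases i
  exacts [⟨1, by simp [ternaryMatrix]⟩, ⟨k + 1, by simp [ternaryMatrix]⟩,
    ⟨m, by simp [ternaryMatrix]⟩]

theorem ternaryMatrix_two_mul_isInt (i j : Fin 3) : ∃ z : ℤ, 2 * ternaryMatrix k s m i j = z := by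
  fin_cases i <;> fin_cases j
  exacts [⟨2, by simp [ternaryMatrix]⟩, ⟨1, by simp [ternaryMatrix]⟩, ⟨0, by simp [ternaryMatrix]⟩,
    ⟨1, by simp [ternaryMatrix]⟩, ⟨2 * k + 2, by simp [ternaryMatrix]; ring⟩,
    ⟨s, by simp [ternaryMatrix, mul_div_cancel₀]⟩, ⟨0, by simp [ternaryMatrix]⟩,
    ⟨s, by simp [ternaryMatrix, mul_div_cancel₀]⟩, ⟨2 * m, by simp [ternaryMatrix]⟩]

theorem det_ternaryMatrix :
    (ternaryMatrix k s m).det = (((4 * k + 3) * m - s ^ 2 : ℤ) : ℚ) / 4 := by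
  rw [ternaryMatrix, det_fin_three]
  simp only [of_apply, cons_val', cons_val_zero, cons_val_one, cons_val, cons_val_fin_one,
    one_mul, mul_zero, add_zero, zero_mul, sub_zero]
  push_cast
  ring

theorem four_mul_mul_ternaryMatrix_quadForm (x : Fin 3 → ℚ) :
    4 * (4 * k + 3) * (x ⬝ᵥ ternaryMatrix k s m *ᵥ x) =
      (4 * k + 3) * (2 * x 0 + x 1) ^ 2 + ((4 * k + 3) * x 1 + 2 * s * x 2) ^ 2 +
        4 * ((4 * k + 3) * m - s ^ 2) * x 2 ^ 2 := by
  simp only [dotProduct, mulVec, ternaryMatrix, Fin.sum_univ_three, of_apply, cons_val',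
    cons_val_fin_one, cons_val_zero, cons_val_one, cons_val]
  ring

variable {k s m}

theorem ternaryMatrix_quadForm_pos (hk : 0 ≤ k) (hD : 0 < (4 * k + 3) * m - s ^ 2)
    {x : Fin 3 → ℚ} (hx : x ≠ 0) : 0 < x ⬝ᵥ ternaryMatrix k s m *ᵥ x := by
  have hq : (0 : ℚ) < 4 * k + 3 := by positivity
  have hD : (0 : ℚ) < (4 * k + 3) * m - s ^ 2 := by exact_mod_cast hD
  refine pos_of_mul_pos_right (a := 4 * (4 * (k : ℚ) + 3)) ?_ (by positivity)
  rw [four_mul_mul_ternaryMatrix_quadForm]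
  rcases ne_or_eq (x 2) 0 with h2 | h2
  · positivity
  rcases ne_or_eq (x 1) 0 with h1 | h1
  · simp only [h2, mul_zero, add_zero, ne_eq, OfNat.ofNat_ne_zero, not_false_eq_true, zero_pow]
    positivity
  have h0 : x 0 ≠ 0 := fun h0 => hx (funext fun i => by fin_cases i <;> assumption)
  simp only [h1, h2, mul_zero, add_zero, ne_eq, OfNat.ofNat_ne_zero, not_false_eq_true, zero_pow]
  positivity

end ternaryMatrix

/-- For every prime `p` there exists a symmetric positive definite `3 × 3`
rational matrix `T` with integral diagonal entries, `2T` integral, and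
`det T = p/4` (equivalently `D(T) = 4 · det T = p`). -/
theorem exists_ternary_half_integral_with_D_eq_p
    (p : ℕ) (hp : p.Prime) :
    ∃ T : Matrix (Fin 3) (Fin 3) ℚ,
      T.IsSymm ∧
      (∀ i, ∃ z : ℤ, T i i = (z : ℚ)) ∧
      (∀ i j, ∃ z : ℤ, 2 * T i j = (z : ℚ)) ∧
      (∀ x : Fin 3 → ℚ, x ≠ 0 → 0 < x ⬝ᵥ T.mulVec x) ∧
      T.det = (p : ℚ) / 4 := by
  obtain ⟨q, hq, hq3, hsq⟩ := exists_prime_mod_four_eq_three_isSquare_neg hp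
  have : NeZero q := ⟨hq.ne_zero⟩
  obtain ⟨s, m, hm⟩ := exists_dvd_sq_add_of_isSquare_neg hsq
  obtain ⟨k, rfl⟩ : ∃ k, q = 4 * k + 3 := ⟨q / 4, by omega⟩
  have hD : (4 * (k : ℤ) + 3) * m - (s : ℤ) ^ 2 = p := by
    rw [sub_eq_iff_eq_add']; exact_mod_cast hm.symm
  refine ⟨ternaryMatrix k s m, ternaryMatrix_isSymm _ _ _, ternaryMatrix_diag_isInt _ _ _,
    ternaryMatrix_two_mul_isInt _ _ _, fun x hx => ?_, ?_⟩
  · exact ternaryMatrix_quadForm_pos (by positivity) (hD ▸ mod_cast hp.pos) hx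
  · rw [det_ternaryMatrix, hD, Int.cast_natCast]
end
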